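/- arXiv:2205.09378 — 3 statements merged into one kernel-verified Lean document; each statement's English description precedes it below -/
import Mathlib

section
/- Consider a two-user decode-and-forward relay network with L ≥ 1 hops and a fixed relay assignment. For i ∈ {1,2} and l ∈ {0,…,L−1}, user i transmits in hop l with power pᵢ(l) ∈ [0,P], where P > 0. For l ∈ {1,…,L}, with direct channel power gains hᵢ(l) > 0, cross-channel power gains g_{ji}(l) ≥ 0 (j ≠ i), and noise power σ² > 0, the SINR of user i in hop l is γᵢ(l) = pᵢ(l−1)·hᵢ(l)/(σ² + p_j(l−1)·g_{ji}(l)), and the achievable sum-rate is R(p₁,p₂) = log₂(1 + min_{1≤l≤L} γ₁(l)) + log₂(1 + min_{1≤l≤L} γ₂(l)). Then there exists a power allocation (p₁*, p₂*) ∈ [0,P]^L × [0,P]^L that maximizes R over [0,P]^L × [0,P]^L and for which the per-hop SINRs of each user are all equal: γ₁(l) = γ₁(1) and γ₂(l) = γ₂(1) for every l ∈ {1,…,L}. -/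
/-- SINR of user `i ∈ {0,1}` in hop `l` of a two-user multi-hop network:
`γᵢ(l) = pᵢ(l)·hᵢ(l)/(σ² + p_j(l)·g_{ji}(l))` where `j = i+1` is the other
user, `hᵢ(l)` is user `i`'s direct channel power gain in hop `l`, and `gᵢ(l)`
is the cross-channel power gain into user `i`'s receiver in hop `l`
(hops indexed so that `p(·,l)` is the transmit power used in hop `l+1`). -/
noncomputable def twoUserSINR (L : ℕ) (σ2 : ℝ) (h g : Fin 2 → Fin L → ℝ)
    (p : Fin 2 → Fin L → ℝ) (i : Fin 2) (l : Fin L) : ℝ :=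
  p i l * h i l / (σ2 + p (i + 1) l * g i l)

/-- Achievable sum-rate of the two-user decode-and-forward network:
`R(p) = Σᵢ log₂(1 + min over hops of γᵢ(l))`. -/
noncomputable def twoUserSumRate (L : ℕ) (σ2 : ℝ) (h g : Fin 2 → Fin L → ℝ)
    (p : Fin 2 → Fin L → ℝ) : ℝ :=
  ∑ i, Real.logb 2 (1 + ⨅ l, twoUserSINR L σ2 h g p i l)

/-!
Take a maximizer `p` of the sum-rate on the compact power box and let `mᵢ` be the smallest SINR
of user `i`. In each hop, the powers meeting the targets `m₁, m₂` with equality solve a 2×2 linear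
system, and its solution is dominated by the powers of `p`, which meet the same targets with
inequality. These powers stay in the box and keep every minimal SINR, hence the sum-rate.
-/

open Set

section EqualizingPower

variable {σ h₁ h₂ g₁ g₂ m₁ m₂ p₁ p₂ : ℝ}

/-- Cramer's rule for `q₁ h₁ = m₁ (σ + q₂ g₁)`, `q₂ h₂ = m₂ (σ + q₁ g₂)`; the second unknown is
`equalizingPower σ h₂ h₁ g₂ g₁ m₂ m₁`. -/
noncomputable def equalizingPower (σ h₁ h₂ g₁ g₂ m₁ m₂ : ℝ) : ℝ :=
  m₁ * σ * (h₂ + m₂ * g₁) / (h₁ * h₂ - m₁ * m₂ * g₁ * g₂)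

theorem equalizingPower_nonneg (hσ : 0 < σ) (hh₂ : 0 < h₂) (hg₁ : 0 ≤ g₁) (hm₁ : 0 ≤ m₁)
    (hm₂ : 0 ≤ m₂) (hdet : 0 < h₁ * h₂ - m₁ * m₂ * g₁ * g₂) :
    0 ≤ equalizingPower σ h₁ h₂ g₁ g₂ m₁ m₂ := by
  unfold equalizingPower; positivity

theorem equalizingPower_mul (hdet : h₁ * h₂ - m₁ * m₂ * g₁ * g₂ ≠ 0) :
    equalizingPower σ h₁ h₂ g₁ g₂ m₁ m₂ * h₁ =
      m₁ * (σ + equalizingPower σ h₂ h₁ g₂ g₁ m₂ m₁ * g₁) := by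
  unfold equalizingPower
  rw [show h₂ * h₁ - m₂ * m₁ * g₂ * g₁ = h₁ * h₂ - m₁ * m₂ * g₁ * g₂ by ring]
  linear_combination (m₁ * σ) * mul_inv_cancel₀ hdet

theorem equalizingPower_sinr (hσ : 0 < σ) (hh₁ : 0 < h₁) (hg₁ : 0 ≤ g₁) (hg₂ : 0 ≤ g₂)
    (hm₁ : 0 ≤ m₁) (hm₂ : 0 ≤ m₂) (hdet : 0 < h₁ * h₂ - m₁ * m₂ * g₁ * g₂) :
    equalizingPower σ h₁ h₂ g₁ g₂ m₁ m₂ * h₁ /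
      (σ + equalizingPower σ h₂ h₁ g₂ g₁ m₂ m₁ * g₁) = m₁ := by
  have hq₂ := equalizingPower_nonneg hσ hh₁ hg₂ hm₂ hm₁
    (by linarith : 0 < h₂ * h₁ - m₂ * m₁ * g₂ * g₁)
  rw [div_eq_iff (by positivity), equalizingPower_mul hdet.ne']

variable (hσ : 0 < σ) (hh₁ : 0 < h₁) (hh₂ : 0 < h₂) (hg₁ : 0 ≤ g₁) (hg₂ : 0 ≤ g₂)
  (hp₁ : 0 ≤ p₁) (hp₂ : 0 ≤ p₂) (hm₁ : 0 ≤ m₁) (hm₂ : 0 ≤ m₂)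
  (e₁ : m₁ * (σ + p₂ * g₁) ≤ p₁ * h₁) (e₂ : m₂ * (σ + p₁ * g₂) ≤ p₂ * h₂)
include hσ hh₁ hh₂ hg₁ hg₂ hp₁ hp₂ hm₁ hm₂ e₁ e₂

theorem det_pos_of_le_sinr : 0 < h₁ * h₂ - m₁ * m₂ * g₁ * g₂ := by
  rcases (mul_nonneg hm₁ hm₂).eq_or_lt with hm | hm
  · rw [← hm]; simpa using mul_pos hh₁ hh₂
  · -- multiplying the two constraints gives `p₁ p₂ · det ≥ m₁ m₂ σ² > 0`
    have hprod := mul_le_mul e₁ e₂ (by positivity) (by positivity)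
    have hdet : m₁ * m₂ * σ ^ 2 ≤ p₁ * p₂ * (h₁ * h₂ - m₁ * m₂ * g₁ * g₂) := by
      nlinarith [mul_nonneg (mul_nonneg hm.le hσ.le) (add_nonneg (mul_nonneg hp₁ hg₂)
        (mul_nonneg hp₂ hg₁))]
    exact pos_of_mul_pos_right (lt_of_lt_of_le (by positivity) hdet) (mul_nonneg hp₁ hp₂)

theorem equalizingPower_le : equalizingPower σ h₁ h₂ g₁ g₂ m₁ m₂ ≤ p₁ := by
  rw [equalizingPower, div_le_iff₀ (det_pos_of_le_sinr hσ hh₁ hh₂ hg₁ hg₂ hp₁ hp₂ hm₁ hm₂ e₁ e₂)]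
  nlinarith [mul_le_mul_of_nonneg_left e₂ (mul_nonneg hm₁ hg₁),
    mul_le_mul_of_nonneg_right e₁ hh₂.le]

end EqualizingPower

section TwoUserNetwork

variable {L : ℕ} {σ2 : ℝ} {h g p : Fin 2 → Fin L → ℝ}

theorem twoUserSINR_denom_pos (hσ2 : 0 < σ2) (hg : ∀ i l, 0 ≤ g i l) (hp : ∀ i l, 0 ≤ p i l)
    (i : Fin 2) (l : Fin L) : 0 < σ2 + p (i + 1) l * g i l := by
  have := hp (i + 1) l
  have := hg i l
  positivity

theorem twoUserSINR_nonneg (hσ2 : 0 < σ2) (hh : ∀ i l, 0 ≤ h i l) (hg : ∀ i l, 0 ≤ g i l)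
    (hp : ∀ i l, 0 ≤ p i l) (i : Fin 2) (l : Fin L) : 0 ≤ twoUserSINR L σ2 h g p i l :=
  div_nonneg (mul_nonneg (hp i l) (hh i l)) (twoUserSINR_denom_pos hσ2 hg hp i l).le

theorem continuousOn_twoUserSumRate [Nonempty (Fin L)] (hσ2 : 0 < σ2)
    (hh : ∀ i l, 0 ≤ h i l) (hg : ∀ i l, 0 ≤ g i l) :
    ContinuousOn (twoUserSumRate L σ2 h g) {p | ∀ i l, 0 ≤ p i l} := by
  refine continuousOn_finsetSum _ fun i _ => ?_
  have hsinr (l : Fin L) :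
      ContinuousOn (fun p => twoUserSINR L σ2 h g p i l) {p | ∀ i l, 0 ≤ p i l} :=
    ContinuousOn.div (by fun_prop) (by fun_prop) fun p hp =>
      (twoUserSINR_denom_pos hσ2 hg hp i l).ne'
  have hmin : ContinuousOn (fun p => ⨅ l, twoUserSINR L σ2 h g p i l)
      {p | ∀ i l, 0 ≤ p i l} := by
    simpa only [Finset.inf'_univ_eq_ciInf] using
      ContinuousOn.finset_inf'_apply Finset.univ_nonempty fun l _ => hsinr l
  refine ((continuousOn_const.add hmin).log fun p hp => ?_).div_const _
  rw [Pi.add_apply]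
  linarith [Real.iInf_nonneg (twoUserSINR_nonneg hσ2 hh hg hp i)]

theorem exists_le_twoUserSINR_eq {m : Fin 2 → ℝ} (hσ2 : 0 < σ2) (hh : ∀ i l, 0 < h i l)
    (hg : ∀ i l, 0 ≤ g i l) (hp : ∀ i l, 0 ≤ p i l) (hm : ∀ i, 0 ≤ m i)
    (hmp : ∀ i l, m i ≤ twoUserSINR L σ2 h g p i l) :
    ∃ q : Fin 2 → Fin L → ℝ, (∀ i l, 0 ≤ q i l ∧ q i l ≤ p i l) ∧
      ∀ i l, twoUserSINR L σ2 h g q i l = m i := by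
  have hother : ∀ i : Fin 2, i + 1 + 1 = i := by decide
  have he (i : Fin 2) (l : Fin L) : m i * (σ2 + p (i + 1) l * g i l) ≤ p i l * h i l :=
    (le_div_iff₀ (twoUserSINR_denom_pos hσ2 hg hp i l)).mp (hmp i l)
  have he' (i : Fin 2) (l : Fin L) :
      m (i + 1) * (σ2 + p i l * g (i + 1) l) ≤ p (i + 1) l * h (i + 1) l := by
    simpa only [hother] using he (i + 1) l
  have hdet (i : Fin 2) (l : Fin L) :=
    det_pos_of_le_sinr hσ2 (hh i l) (hh (i + 1) l) (hg i l) (hg (i + 1) l) (hp i l)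
      (hp (i + 1) l) (hm i) (hm (i + 1)) (he i l) (he' i l)
  refine ⟨fun i l => equalizingPower σ2 (h i l) (h (i + 1) l) (g i l) (g (i + 1) l) (m i)
    (m (i + 1)), fun i l => ⟨?_, ?_⟩, fun i l => ?_⟩
  · exact equalizingPower_nonneg hσ2 (hh (i + 1) l) (hg i l) (hm i) (hm (i + 1)) (hdet i l)
  · exact equalizingPower_le hσ2 (hh i l) (hh (i + 1) l) (hg i l) (hg (i + 1) l) (hp i l)
      (hp (i + 1) l) (hm i) (hm (i + 1)) (he i l) (he' i l)
  · simp only [twoUserSINR, hother]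
    exact equalizingPower_sinr hσ2 (hh i l) (hg i l) (hg (i + 1) l) (hm i) (hm (i + 1)) (hdet i l)

end TwoUserNetwork

/-- **Equal per-hop SINR at an optimum (Lemma 1).**
In a two-user decode-and-forward network with `L ≥ 1` hops, positive direct
gains, nonnegative cross gains, `σ² > 0` and `P > 0`, there exists a power
allocation in the box `[0,P]^{2×L}` that maximizes the achievable sum-rate over
the box and for which each user's per-hop SINRs are equal across all hops. -/
theorem exists_maximizer_with_equal_SINRs
    (L : ℕ) (hL : 1 ≤ L) (σ2 P : ℝ) (hσ2 : 0 < σ2) (hP : 0 < P)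
    (h g : Fin 2 → Fin L → ℝ)
    (hh : ∀ i l, 0 < h i l) (hg : ∀ i l, 0 ≤ g i l) :
    ∃ pstar : Fin 2 → Fin L → ℝ,
      (∀ i l, pstar i l ∈ Set.Icc (0 : ℝ) P) ∧
      (∀ p : Fin 2 → Fin L → ℝ, (∀ i l, p i l ∈ Set.Icc (0 : ℝ) P) →
        twoUserSumRate L σ2 h g p ≤ twoUserSumRate L σ2 h g pstar) ∧
      (∀ i l, twoUserSINR L σ2 h g pstar i l =
        twoUserSINR L σ2 h g pstar i ⟨0, hL⟩) := by
  have : Nonempty (Fin L) := ⟨⟨0, hL⟩⟩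
  set box : Set (Fin 2 → Fin L → ℝ) := univ.pi fun _ => univ.pi fun _ => Icc 0 P
  have mem_box (p) : p ∈ box ↔ ∀ i l, p i l ∈ Icc 0 P := by simp only [box, mem_univ_pi]
  obtain ⟨p, hp, hmax⟩ := (isCompact_univ_pi fun _ => isCompact_univ_pi fun _ => isCompact_Icc)
    |>.exists_isMaxOn ⟨0, (mem_box 0).2 fun _ _ => ⟨le_rfl, hP.le⟩⟩
      ((continuousOn_twoUserSumRate hσ2 (fun i l => (hh i l).le) hg).mono
        fun q hq i l => ((mem_box q).1 hq i l).1)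
  rw [mem_box] at hp
  obtain ⟨q, hqp, hq⟩ := exists_le_twoUserSINR_eq (m := fun i => ⨅ l, twoUserSINR L σ2 h g p i l)
    hσ2 hh hg (fun i l => (hp i l).1)
    (fun i => Real.iInf_nonneg (twoUserSINR_nonneg hσ2 (fun i l => (hh i l).le) hg
      (fun i l => (hp i l).1) i))
    (fun i l => ciInf_le (Finite.bddBelow_range _) l)
  have hrate : twoUserSumRate L σ2 h g q = twoUserSumRate L σ2 h g p := by
    simp only [twoUserSumRate, hq, ciInf_const]
  refine ⟨q, fun i l => ⟨(hqp i l).1, (hqp i l).2.trans (hp i l).2⟩,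
    fun p' hp' => hrate ▸ hmax ((mem_box p').2 hp'), fun i l => by rw [hq, hq]⟩
end

section
/- Consider a two-user decode-and-forward relay network with L ≥ 1 hops and a fixed relay assignment. For i ∈ {1,2} and l ∈ {0,…,L−1}, user i transmits in hop l with power pᵢ(l) ∈ [0,P], where P > 0. For l ∈ {1,…,L}, with direct channel power gains hᵢ(l) > 0, cross-channel power gains g_{ji}(l) ≥ 0 (j ≠ i), and noise power σ² > 0, the SINR of user i in hop l is γᵢ(l) = pᵢ(l−1)·hᵢ(l)/(σ² + p_j(l−1)·g_{ji}(l)), and the achievable sum-rate is R(p₁,p₂) = log₂(1 + min_{1≤l≤L} γ₁(l)) + log₂(1 + min_{1≤l≤L} γ₂(l)). Then there exists a power allocation (p₁*, p₂*) ∈ [0,P]^L × [0,P]^L maximizing R over [0,P]^L × [0,P]^L such that (a) each user's per-hop SINRs are all equal across the L hops, and (b) at least two of the 2L transmit powers are binary, i.e., there exist two distinct pairs (i,l) ≠ (i′,l′) with p*ᵢ(l) ∈ {0,P} and p*ᵢ′(l′) ∈ {0,P}. -/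
open Filter Topology Function Set

namespace TwoUserRelay

lemma fin_two_add_one_add_one (i : Fin 2) : i + 1 + 1 = i := by fin_cases i <;> rfl

lemma fin_two_add_one_ne (i : Fin 2) : i + 1 ≠ i := by fin_cases i <;> decide

lemma fin_two_eq_or_eq_add_one (k i : Fin 2) : k = i ∨ k = i + 1 := by
  revert k i; decide

variable {L : ℕ}

def matchingDet (h g : Fin 2 → Fin L → ℝ) (m : Fin 2 → ℝ) (l : Fin L) : ℝ :=
  h 0 l * h 1 l - m 0 * m 1 * (g 0 l * g 1 l)

def matchingNum (σ2 : ℝ) (h g : Fin 2 → Fin L → ℝ) (m : Fin 2 → ℝ) (i : Fin 2) (l : Fin L) : ℝ :=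
  m i * σ2 * (h (i + 1) l + m (i + 1) * g i l)

/-- Forcing every hop of user `i` to have SINR exactly `m i` is the linear system
`pᵢ hᵢ = mᵢ (σ² + pⱼ gᵢ)`, `pⱼ hⱼ = mⱼ (σ² + pᵢ gⱼ)` in each hop; by Cramer's rule its
solution is `matchingNum / matchingDet`. -/
noncomputable def matchedPower (σ2 : ℝ) (h g : Fin 2 → Fin L → ℝ) (m : Fin 2 → ℝ)
    (i : Fin 2) (l : Fin L) : ℝ :=
  matchingNum σ2 h g m i l / matchingDet h g m l

/-- The constraints `matchedPower ≤ P`, with the denominator cleared. -/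
def feasibleSINRs (σ2 P : ℝ) (h g : Fin 2 → Fin L → ℝ) : Set (Fin 2 → ℝ) :=
  {m | (∀ i, 0 ≤ m i) ∧ ∀ i l, matchingNum σ2 h g m i l ≤ P * matchingDet h g m l}

def IsActive (σ2 P : ℝ) (h g : Fin 2 → Fin L → ℝ) (m : Fin 2 → ℝ) (il : Fin 2 × Fin L) : Prop :=
  matchingNum σ2 h g m il.1 il.2 = P * matchingDet h g m il.2

noncomputable def rate (m : Fin 2 → ℝ) : ℝ := ∑ i, Real.logb 2 (1 + m i)

variable {σ2 P : ℝ} {h g : Fin 2 → Fin L → ℝ} {m : Fin 2 → ℝ}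

lemma matchingDet_eq (m : Fin 2 → ℝ) (i : Fin 2) (l : Fin L) :
    matchingDet h g m l = h i l * h (i + 1) l - m i * m (i + 1) * (g i l * g (i + 1) l) := by
  fin_cases i
  · rfl
  · simp [matchingDet]; ring

lemma rate_eq (i : Fin 2) {x : Fin 2 → ℝ} (hx : ∀ k, 0 ≤ x k) :
    rate x = Real.logb 2 ((1 + x i) * (1 + x (i + 1))) := by
  have := hx i; have := hx (i + 1)
  rw [Real.logb_mul (by positivity) (by positivity)]
  fin_cases i <;> simp [rate, Fin.sum_univ_two, add_comm]

lemma matchingNum_nonneg (hσ2 : 0 < σ2) (hh : ∀ i l, 0 < h i l) (hg : ∀ i l, 0 ≤ g i l)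
    (hm : ∀ k, 0 ≤ m k) (i : Fin 2) (l : Fin L) : 0 ≤ matchingNum σ2 h g m i l := by
  have := hh (i + 1) l; have := hg i l; have := hm i; have := hm (i + 1)
  unfold matchingNum; positivity

lemma matchingDet_pos (hσ2 : 0 < σ2) (hP : 0 < P) (hh : ∀ i l, 0 < h i l)
    (hg : ∀ i l, 0 ≤ g i l) (hm : m ∈ feasibleSINRs σ2 P h g) (l : Fin L) :
    0 < matchingDet h g m l := by
  rcases (hm.1 0).eq_or_lt with h0 | h0
  · have := hh 0 l; have := hh 1 l
    simp only [matchingDet, ← h0, zero_mul, sub_zero]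
    positivity
  · have : 0 < matchingNum σ2 h g m 0 l := by
      have := hh 1 l; have := hg 0 l; have := hm.1 1
      unfold matchingNum; positivity
    exact pos_of_mul_pos_right (this.trans_le (hm.2 0 l)) hP.le

lemma matchedPower_mem_Icc (hσ2 : 0 < σ2) (hP : 0 < P) (hh : ∀ i l, 0 < h i l)
    (hg : ∀ i l, 0 ≤ g i l) (hm : m ∈ feasibleSINRs σ2 P h g) (i : Fin 2) (l : Fin L) :
    matchedPower σ2 h g m i l ∈ Icc 0 P := by
  have hD := matchingDet_pos hσ2 hP hh hg hm l
  exact ⟨div_nonneg (matchingNum_nonneg hσ2 hh hg hm.1 i l) hD.le,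
    (div_le_iff₀ hD).2 (hm.2 i l)⟩

lemma matchedPower_eq_of_isActive (hσ2 : 0 < σ2) (hP : 0 < P) (hh : ∀ i l, 0 < h i l)
    (hg : ∀ i l, 0 ≤ g i l) (hm : m ∈ feasibleSINRs σ2 P h g) {il : Fin 2 × Fin L}
    (hact : IsActive σ2 P h g m il) : matchedPower σ2 h g m il.1 il.2 = P :=
  (div_eq_iff (matchingDet_pos hσ2 hP hh hg hm il.2).ne').2 hact

lemma matchedPower_eq_zero {i : Fin 2} (hmi : m i = 0) (l : Fin L) :
    matchedPower σ2 h g m i l = 0 := by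
  simp [matchedPower, matchingNum, hmi]

lemma twoUserSINR_matchedPower (hσ2 : 0 < σ2) (hP : 0 < P) (hh : ∀ i l, 0 < h i l)
    (hg : ∀ i l, 0 ≤ g i l) (hm : m ∈ feasibleSINRs σ2 P h g) (i : Fin 2) (l : Fin L) :
    twoUserSINR L σ2 h g (matchedPower σ2 h g m) i l = m i := by
  have hD := matchingDet_pos hσ2 hP hh hg hm l
  have hden : 0 < σ2 + matchedPower σ2 h g m (i + 1) l * g i l := by
    have := (matchedPower_mem_Icc hσ2 hP hh hg hm (i + 1) l).1; have := hg i l; positivity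
  rw [twoUserSINR, div_eq_iff hden.ne', matchedPower, matchedPower, matchingNum, matchingNum,
    fin_two_add_one_add_one]
  field_simp
  rw [matchingDet_eq m i]
  ring

lemma twoUserSumRate_matchedPower [Nonempty (Fin L)] (hσ2 : 0 < σ2) (hP : 0 < P)
    (hh : ∀ i l, 0 < h i l) (hg : ∀ i l, 0 ≤ g i l) (hm : m ∈ feasibleSINRs σ2 P h g) :
    twoUserSumRate L σ2 h g (matchedPower σ2 h g m) = rate m := by
  simp only [twoUserSumRate, twoUserSINR_matchedPower hσ2 hP hh hg hm, ciInf_const, rate]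

lemma matchingNum_le_of_le_twoUserSINR (hσ2 : 0 < σ2) (hh : ∀ i l, 0 < h i l)
    (hg : ∀ i l, 0 ≤ g i l) {p : Fin 2 → Fin L → ℝ} (hp : ∀ i l, p i l ∈ Icc 0 P)
    (hm : ∀ k, 0 ≤ m k) {l : Fin L} (hle : ∀ k, m k ≤ twoUserSINR L σ2 h g p k l) (i : Fin 2) :
    matchingNum σ2 h g m i l ≤ P * matchingDet h g m l := by
  have hcleared : ∀ k, m k * (σ2 + p (k + 1) l * g k l) ≤ p k l * h k l := fun k =>
    (le_div_iff₀ (by have := (hp (k + 1) l).1; have := hg k l; positivity)).1 (hle k)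
  have hi := hcleared i
  have hj := hcleared (i + 1)
  rw [fin_two_add_one_add_one] at hj
  rw [matchingDet_eq m i]
  unfold matchingNum
  -- eliminating `p (i + 1) l` between the two SINR bounds
  have hnum : m i * σ2 * (h (i + 1) l + m (i + 1) * g i l)
      ≤ p i l * (h i l * h (i + 1) l - m i * m (i + 1) * (g i l * g (i + 1) l)) := by
    nlinarith [mul_le_mul_of_nonneg_right hi (hh (i + 1) l).le,
      mul_le_mul_of_nonneg_left hj (mul_nonneg (hm i) (hg i l))]
  rcases (hm i).eq_or_lt with hmi | hmi
  · rw [← hmi]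
    have := hh i l; have := hh (i + 1) l; have := (hp i l).1.trans (hp i l).2
    simp only [zero_mul, sub_zero]
    positivity
  · have hnum_pos : 0 < m i * σ2 * (h (i + 1) l + m (i + 1) * g i l) := by
      have := hh (i + 1) l; have := hg i l; have := hm (i + 1); positivity
    have hdet := pos_of_mul_pos_right (hnum_pos.trans_le hnum) (hp i l).1
    exact hnum.trans (mul_le_mul_of_nonneg_right (hp i l).2 hdet.le)

lemma iInf_twoUserSINR_mem_feasibleSINRs [Nonempty (Fin L)] (hσ2 : 0 < σ2)
    (hh : ∀ i l, 0 < h i l) (hg : ∀ i l, 0 ≤ g i l) {p : Fin 2 → Fin L → ℝ}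
    (hp : ∀ i l, p i l ∈ Icc 0 P) :
    (fun i => ⨅ l, twoUserSINR L σ2 h g p i l) ∈ feasibleSINRs σ2 P h g := by
  have hm : ∀ k, 0 ≤ ⨅ l, twoUserSINR L σ2 h g p k l := fun k => le_ciInf fun l => by
    have := (hp k l).1; have := (hp (k + 1) l).1; have := hh k l; have := hg k l
    unfold twoUserSINR; positivity
  exact ⟨hm, fun i l => matchingNum_le_of_le_twoUserSINR hσ2 hh hg hp hm
    (fun k => ciInf_le (Finite.bddBelow_range _) l) i⟩

lemma continuous_matchingNum (σ2 : ℝ) (h g : Fin 2 → Fin L → ℝ) (i : Fin 2) (l : Fin L) :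
    Continuous fun m => matchingNum σ2 h g m i l := by
  unfold matchingNum; fun_prop

lemma continuous_matchingDet (h g : Fin 2 → Fin L → ℝ) (l : Fin L) :
    Continuous fun m => matchingDet h g m l := by
  unfold matchingDet; fun_prop

lemma isClosed_feasibleSINRs : IsClosed (feasibleSINRs σ2 P h g) := by
  simp only [feasibleSINRs, ofPred_and, ofPred_forall]
  refine (isClosed_iInter fun i => isClosed_le continuous_const (continuous_apply i)).inter
    (isClosed_iInter fun i => isClosed_iInter fun l => isClosed_le
      (continuous_matchingNum σ2 h g i l) (continuous_const.mul (continuous_matchingDet h g l)))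

lemma mul_le_of_mem_feasibleSINRs (hσ2 : 0 ≤ σ2) (hP : 0 ≤ P) (hh : ∀ i l, 0 < h i l)
    (hg : ∀ i l, 0 ≤ g i l) (hm : m ∈ feasibleSINRs σ2 P h g) (i : Fin 2) (l : Fin L) :
    m i * σ2 ≤ P * h i l := by
  have hcon := hm.2 i l
  rw [matchingDet_eq m i, matchingNum] at hcon
  have hX : 0 ≤ m i * m (i + 1) * (g i l * g (i + 1) l) := by
    have := hm.1 i; have := hm.1 (i + 1); have := hg i l; have := hg (i + 1) l; positivity
  have hY : 0 ≤ m i * σ2 * (m (i + 1) * g i l) := by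
    have := hm.1 i; have := hm.1 (i + 1); have := hg i l; positivity
  have hj := hh (i + 1) l
  have : m i * σ2 * h (i + 1) l ≤ P * h i l * h (i + 1) l := by nlinarith [mul_nonneg hP hX]
  exact le_of_mul_le_mul_right this hj

lemma exists_isMaxOn_rate [Nonempty (Fin L)] (hσ2 : 0 < σ2) (hP : 0 < P)
    (hh : ∀ i l, 0 < h i l) (hg : ∀ i l, 0 ≤ g i l) :
    ∃ m ∈ feasibleSINRs σ2 P h g, IsMaxOn rate (feasibleSINRs σ2 P h g) m := by
  have hne : (feasibleSINRs σ2 P h g).Nonempty := ⟨0, fun _ => le_rfl, fun i l => by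
    have := hh 0 l; have := hh 1 l
    simp only [matchingNum, matchingDet, Pi.zero_apply, zero_mul, sub_zero]
    positivity⟩
  obtain ⟨l₀⟩ := ‹Nonempty (Fin L)›
  have hbdd : feasibleSINRs σ2 P h g ⊆ univ.pi fun i => Icc 0 (P * h i l₀ / σ2) :=
    fun m hm i _ => ⟨hm.1 i,
      (le_div_iff₀ hσ2).2 (mul_le_of_mem_feasibleSINRs hσ2.le hP.le hh hg hm i l₀)⟩
  have hcont : ContinuousOn rate (feasibleSINRs σ2 P h g) :=
    continuousOn_finsetSum _ fun i _ => ContinuousOn.logb (by fun_prop) fun m hm => by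
      have := hm.1 i; positivity
  exact ((isCompact_univ_pi fun _ => isCompact_Icc).of_isClosed_subset
    isClosed_feasibleSINRs hbdd).exists_isMaxOn hne hcont

lemma rate_lt_rate_update (hm : ∀ k, 0 ≤ m k) (k : Fin 2) {t : ℝ} (ht : m k < t) :
    rate m < rate (update m k t) := by
  have hupd : ∀ x, 0 ≤ update m k t x := fun x => by
    rcases eq_or_ne x k with rfl | hx
    · simpa using (hm x).trans ht.le
    · simpa [hx] using hm x
  rw [rate_eq k hm, rate_eq k hupd, update_self, update_of_ne (fin_two_add_one_ne k)]
  have := hm k; have := hm (k + 1)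
  exact Real.logb_lt_logb one_lt_two (by positivity)
    (mul_lt_mul_of_pos_right (by linarith) (by positivity))

/-- If every constraint outside `A` were slack at `m`, the points `c t` would eventually be
feasible, contradicting the maximality of `m`. -/
lemma exists_isActive_of_frequently_rate_lt (hm : m ∈ feasibleSINRs σ2 P h g)
    (hmax : IsMaxOn rate (feasibleSINRs σ2 P h g) m) {ι : Type*} {l : Filter ι}
    {c : ι → Fin 2 → ℝ} (hc : Tendsto c l (𝓝 m)) (A : Set (Fin 2 × Fin L))
    (hcA : ∀ᶠ t in l, (∀ k, 0 ≤ c t k) ∧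
      ∀ il ∈ A, matchingNum σ2 h g (c t) il.1 il.2 ≤ P * matchingDet h g (c t) il.2)
    (hlt : ∃ᶠ t in l, rate m < rate (c t)) :
    ∃ il ∉ A, IsActive σ2 P h g m il := by
  by_contra! hnone
  have hstrict : ∀ il, ∀ᶠ t in l, il ∉ A →
      matchingNum σ2 h g (c t) il.1 il.2 < P * matchingDet h g (c t) il.2 := fun il => by
    by_cases hil : il ∈ A
    · exact .of_forall fun _ h => (h hil).elim
    · exact (hc.eventually ((isOpen_lt (continuous_matchingNum σ2 h g il.1 il.2)
        (continuous_const.mul (continuous_matchingDet h g il.2))).mem_nhds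
        ((hm.2 il.1 il.2).lt_of_ne (hnone il hil)))).mono fun _ h _ => h
  have hfeas : ∀ᶠ t in l, c t ∈ feasibleSINRs σ2 P h g := by
    filter_upwards [hcA, eventually_all.2 hstrict] with t ⟨hnonneg, hA⟩ hout
    refine ⟨hnonneg, fun i l => ?_⟩
    by_cases hil : (i, l) ∈ A
    · exact hA _ hil
    · exact (hout _ hil).le
  exact hlt (hfeas.mono fun t ht => not_lt.2 (isMaxOn_iff.1 hmax _ ht))

lemma exists_isActive_of_update (hm : m ∈ feasibleSINRs σ2 P h g)
    (hmax : IsMaxOn rate (feasibleSINRs σ2 P h g) m) (k : Fin 2) (A : Set (Fin 2 × Fin L))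
    (hA : ∀ t, m k < t → ∀ il ∈ A,
      matchingNum σ2 h g (update m k t) il.1 il.2 ≤ P * matchingDet h g (update m k t) il.2) :
    ∃ il ∉ A, IsActive σ2 P h g m il := by
  have hc : Tendsto (update m k) (𝓝[>] (m k)) (𝓝 m) :=
    ((continuous_const.update k continuous_id).tendsto' (m k) m (update_eq_self k m)).mono_left
      nhdsWithin_le_nhds
  have hgt : ∀ᶠ t in 𝓝[>] (m k), rate m < rate (update m k t) :=
    eventually_nhdsWithin_of_forall fun t ht => rate_lt_rate_update hm.1 k ht
  refine exists_isActive_of_frequently_rate_lt hm hmax hc A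
    (eventually_nhdsWithin_of_forall fun t ht => ⟨fun x => ?_, hA t ht⟩) hgt.frequently
  rcases eq_or_ne x k with rfl | hx
  · simpa using (hm.1 x).trans (le_of_lt ht)
  · simpa [hx] using hm.1 x

lemma not_isLocalMax_affine_add_inv (a b : ℝ) {A u : ℝ} (hA : 0 < A) (hu : 0 < u) :
    ¬ IsLocalMax (fun t => a * t + b + A / t) u := by
  intro hmax
  have hdiff : ∀ t, 0 < t → a * t + b + A / t - (a * u + b + A / u) = (t - u) * (a - A / (t * u)) :=
    fun t ht => by field_simp; ring
  suffices ∃ᶠ t in 𝓝 u, a * u + b + A / u < a * t + b + A / t from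
    this (hmax.mono fun t ht => not_lt.2 ht)
  rcases le_or_gt (A / (u * u)) a with ha | ha
  · have hright : ∀ᶠ t in 𝓝[>] u, a * u + b + A / u < a * t + b + A / t :=
      eventually_nhdsWithin_of_forall fun t (ht : u < t) => by
        have : A / (t * u) < A / (u * u) :=
          div_lt_div_of_pos_left hA (by positivity) (by nlinarith)
        nlinarith [hdiff t (hu.trans ht)]
    exact hright.frequently.filter_mono nhdsWithin_le_nhds
  · have hleft : ∀ᶠ t in 𝓝[<] u, a * u + b + A / u < a * t + b + A / t :=
      mem_of_superset (Ioo_mem_nhdsLT hu) fun t ⟨ht, htu⟩ => by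
        simp only [mem_ofPred_eq]
        have : A / (u * u) < A / (t * u) :=
          div_lt_div_of_pos_left hA (by positivity) (by nlinarith)
        nlinarith [hdiff t ht, mul_pos_of_neg_of_neg (sub_neg.2 htu)
          (by linarith : a - A / (t * u) < 0)]
    exact hleft.frequently.filter_mono nhdsWithin_le_nhds

lemma exists_isActive_ne_of_cross_gain_eq_zero (hm : m ∈ feasibleSINRs σ2 P h g)
    (hmax : IsMaxOn rate (feasibleSINRs σ2 P h g) m) {i : Fin 2} {l₀ : Fin L}
    (hg0 : g i l₀ = 0) : ∃ il ≠ (i, l₀), IsActive σ2 P h g m il :=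
  exists_isActive_of_update hm hmax (i + 1) {(i, l₀)} fun t _ il hil => by
    rw [mem_singleton_iff] at hil
    subst hil
    simpa [matchingNum, matchingDet_eq _ i, hg0, update_of_ne (fin_two_add_one_ne i).symm]
      using hm.2 i l₀

lemma exists_isActive_ne_of_cross_gain_pos (hσ2 : 0 < σ2) (hP : 0 < P)
    (hh : ∀ i l, 0 < h i l) (hg : ∀ i l, 0 ≤ g i l) (hm : m ∈ feasibleSINRs σ2 P h g)
    (hmax : IsMaxOn rate (feasibleSINRs σ2 P h g) m) {i : Fin 2} {l₀ : Fin L}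
    (hmi : 0 < m i) (hmj : 0 < m (i + 1)) (hact : IsActive σ2 P h g m (i, l₀))
    (hgi : 0 < g i l₀) : ∃ il ≠ (i, l₀), IsActive σ2 P h g m il := by
  set β := g i l₀ * (σ2 + P * g (i + 1) l₀)
  -- the target of user `i + 1` that keeps user `i` at full power in hop `l₀`
  set ψ : ℝ → ℝ := fun t => h (i + 1) l₀ * (P * h i l₀ - σ2 * t) / (β * t)
  set c : ℝ → Fin 2 → ℝ := fun t k => if k = i then t else ψ t
  have hci : ∀ t, c t i = t := fun t => if_pos rfl
  have hcj : ∀ t, c t (i + 1) = ψ t := fun t => if_neg (fin_two_add_one_ne i)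
  have hβ : 0 < β := by have := hg (i + 1) l₀; positivity
  have hactive : ∀ t ≠ 0, IsActive σ2 P h g (c t) (i, l₀) := fun t ht => by
    simp only [IsActive, matchingNum, matchingDet_eq _ i, hci, hcj, ψ]
    field_simp
    ring
  have hψm : ψ (m i) = m (i + 1) := by
    simp only [IsActive, matchingNum, matchingDet_eq _ i] at hact
    simp only [ψ, β]
    rw [div_eq_iff (by positivity)]
    linear_combination -hact
  have hcm : c (m i) = m := funext fun k => by
    rcases fin_two_eq_or_eq_add_one k i with rfl | rfl
    · exact hci _
    · exact (hcj _).trans hψm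
  have hψ : ContinuousAt ψ (m i) := by
    simp only [ψ]
    exact ContinuousAt.div (by fun_prop) (by fun_prop) (by positivity)
  have hc : Tendsto c (𝓝 (m i)) (𝓝 m) := by
    have hcont : ContinuousAt c (m i) := continuousAt_pi.2 fun k => by
      rcases fin_two_eq_or_eq_add_one k i with rfl | rfl
      · exact continuousAt_id.congr (.of_forall fun t => (hci t).symm)
      · exact hψ.congr (.of_forall fun t => (hcj t).symm)
    simpa only [hcm] using hcont.tendsto
  have hpos : ∀ᶠ t in 𝓝 (m i), 0 < t ∧ 0 < ψ t :=
    (lt_mem_nhds hmi).and (hψ.eventually (lt_mem_nhds (hψm ▸ hmj)))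
  have hnonneg : ∀ᶠ t in 𝓝 (m i), ∀ k, 0 ≤ c t k := hpos.mono fun t ht k => by
    rcases fin_two_eq_or_eq_add_one k i with rfl | rfl
    · exact (hci t ▸ ht.1).le
    · exact (hcj t ▸ ht.2).le
  refine exists_isActive_of_frequently_rate_lt hm hmax hc {(i, l₀)}
    (hnonneg.and (hpos.mono fun t ht => ?_)) ?_
  · rintro _ rfl
    exact (hactive t ht.1.ne').le
  · have hrate : ∀ t, (∀ k, 0 ≤ c t k) → rate (c t) = Real.logb 2 ((1 + t) * (1 + ψ t)) :=
      fun t ht => by rw [rate_eq i ht, hci, hcj]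
    set C := h (i + 1) l₀ / β
    have hprod : ∀ t ≠ 0, (1 + t) * (1 + ψ t)
        = (1 - C * σ2) * t + (1 + C * P * h i l₀ - C * σ2) + C * P * h i l₀ / t := fun t ht => by
      simp only [ψ, C]
      field_simp
      ring
    have hA : 0 < C * P * h i l₀ := by have := hh (i + 1) l₀; have := hh i l₀; positivity
    have hlt := not_eventually.1
      (not_isLocalMax_affine_add_inv (1 - C * σ2) (1 + C * P * h i l₀ - C * σ2) hA hmi)
    refine (hlt.and_eventually (hpos.and hnonneg)).mono fun t ⟨hlt, ⟨ht, _⟩, hct⟩ => ?_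
    rw [rate_eq i hm.1, ← hψm, hrate t hct]
    refine Real.logb_lt_logb one_lt_two (by rw [hψm]; have := hm.1 (i + 1); positivity) ?_
    rw [hprod _ hmi.ne', hprod _ ht.ne']
    exact not_le.1 hlt

lemma exists_isMaxOn_rate_two_binary [Nonempty (Fin L)] (hσ2 : 0 < σ2) (hP : 0 < P)
    (hh : ∀ i l, 0 < h i l) (hg : ∀ i l, 0 ≤ g i l) :
    ∃ m ∈ feasibleSINRs σ2 P h g, IsMaxOn rate (feasibleSINRs σ2 P h g) m ∧
      ∃ il il' : Fin 2 × Fin L, il ≠ il' ∧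
        matchedPower σ2 h g m il.1 il.2 ∈ ({0, P} : Set ℝ) ∧
        matchedPower σ2 h g m il'.1 il'.2 ∈ ({0, P} : Set ℝ) := by
  obtain ⟨m, hm, hmax⟩ := exists_isMaxOn_rate hσ2 hP hh hg
  obtain ⟨⟨i, l₀⟩, -, hact⟩ := exists_isActive_of_update hm hmax 0 ∅ (by simp)
  have hfull := matchedPower_eq_of_isActive hσ2 hP hh hg hm hact
  refine ⟨m, hm, hmax, ?_⟩
  by_cases hzero : ∃ k, m k = 0
  · obtain ⟨k, hk⟩ := hzero
    have hoff : matchedPower σ2 h g m k l₀ = 0 := matchedPower_eq_zero hk l₀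
    refine ⟨(i, l₀), (k, l₀), fun heq => ?_, .inr hfull, .inl hoff⟩
    obtain rfl : i = k := congrArg Prod.fst heq
    exact hP.ne' (hfull.symm.trans hoff)
  · push Not at hzero
    have hpos : ∀ k, 0 < m k := fun k => (hm.1 k).lt_of_ne' (hzero k)
    obtain ⟨il, hne, hact'⟩ : ∃ il ≠ (i, l₀), IsActive σ2 P h g m il := by
      rcases (hg i l₀).eq_or_lt with hg0 | hgi
      · exact exists_isActive_ne_of_cross_gain_eq_zero hm hmax hg0.symm
      · exact exists_isActive_ne_of_cross_gain_pos hσ2 hP hh hg hm hmax (hpos i) (hpos (i + 1))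
          hact hgi
    exact ⟨(i, l₀), il, hne.symm, .inr hfull,
      .inr (matchedPower_eq_of_isActive hσ2 hP hh hg hm hact')⟩

end TwoUserRelay

open TwoUserRelay

/-- **Binary power allocation at an optimum (Theorem 1).**
In a two-user decode-and-forward network with `L ≥ 1` hops, positive direct
gains, nonnegative cross gains, `σ² > 0` and `P > 0`, there exists a power
allocation in the box `[0,P]^{2×L}` that maximizes the achievable sum-rate over
the box, for which (a) each user's per-hop SINRs are equal across all hops and
(b) at least two of the `2L` transmit powers are binary, i.e. equal to `0` or
`P`. -/
theorem exists_maximizer_equal_SINRs_and_two_binary_powers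
    (L : ℕ) (hL : 1 ≤ L) (σ2 P : ℝ) (hσ2 : 0 < σ2) (hP : 0 < P)
    (h g : Fin 2 → Fin L → ℝ)
    (hh : ∀ i l, 0 < h i l) (hg : ∀ i l, 0 ≤ g i l) :
    ∃ pstar : Fin 2 → Fin L → ℝ,
      (∀ i l, pstar i l ∈ Set.Icc (0 : ℝ) P) ∧
      (∀ p : Fin 2 → Fin L → ℝ, (∀ i l, p i l ∈ Set.Icc (0 : ℝ) P) →
        twoUserSumRate L σ2 h g p ≤ twoUserSumRate L σ2 h g pstar) ∧
      (∀ i l, twoUserSINR L σ2 h g pstar i l =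
        twoUserSINR L σ2 h g pstar i ⟨0, hL⟩) ∧
      (∃ il il' : Fin 2 × Fin L, il ≠ il' ∧
        pstar il.1 il.2 ∈ ({0, P} : Set ℝ) ∧
        pstar il'.1 il'.2 ∈ ({0, P} : Set ℝ)) := by
  have : Nonempty (Fin L) := ⟨⟨0, hL⟩⟩
  obtain ⟨m, hm, hmax, hbinary⟩ := exists_isMaxOn_rate_two_binary hσ2 hP hh hg
  refine ⟨matchedPower σ2 h g m, matchedPower_mem_Icc hσ2 hP hh hg hm, fun p hp => ?_,
    fun i l => ?_, hbinary⟩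
  · calc twoUserSumRate L σ2 h g p = rate fun i => ⨅ l, twoUserSINR L σ2 h g p i l := rfl
      _ ≤ rate m := isMaxOn_iff.1 hmax _ (iInf_twoUserSINR_mem_feasibleSINRs hσ2 hh hg hp)
      _ = twoUserSumRate L σ2 h g (matchedPower σ2 h g m) :=
        (twoUserSumRate_matchedPower hσ2 hP hh hg hm).symm
  · rw [twoUserSINR_matchedPower hσ2 hP hh hg hm, twoUserSINR_matchedPower hσ2 hP hh hg hm]
end

section
/- Consider a two-user single-hop Gaussian interference channel with direct channel power gains a₁, a₂ > 0, cross-channel power gains b₁₂, b₂₁ ≥ 0, and noise power σ² > 0, where for transmit powers p₁, p₂ ≥ 0 the SINRs are γ₁(p₁,p₂) = a₁p₁/(σ² + b₂₁p₂) and γ₂(p₁,p₂) = a₂p₂/(σ² + b₁₂p₁). Fix p₂ ∈ [0,P] for some P > 0 and define F(p₁) = (1 + γ₁(p₁,p₂))·(1 + γ₂(p₁,p₂)). Then for every p₁ ∈ [0,P], F(p₁) ≤ max(F(0), F(P)); that is, over p₁ ∈ [0,P] the product F is maximized at an endpoint of the interval. -/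
/-! The product `(1 + c x) (1 + d / (s + b x))` equals `(1 + c x) + d · (1 + c x) / (s + b x)`.
The linear-fractional function `(1 + c x) / (s + b x)` is nondecreasing on `x ≥ 0` when `b ≤ c s`
and convex there when `c s ≤ b`, so for `d ≥ 0` the product is monotone or convex in `x`. Either
way it is quasiconvex, and a quasiconvex function attains its maximum over an interval at an
endpoint. -/

open Set

theorem QuasiconvexOn.le_max_of_mem_Icc {𝕜 β : Type*} [Field 𝕜] [LinearOrder 𝕜]
    [IsStrictOrderedRing 𝕜] [LinearOrder β] {s : Set 𝕜} {f : 𝕜 → β} {x y z : 𝕜}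
    (hf : QuasiconvexOn 𝕜 s f) (hx : x ∈ s) (hy : y ∈ s) (hz : z ∈ Icc x y) :
    f z ≤ max (f x) (f y) := by
  rw [← segment_eq_Icc (hz.1.trans hz.2)] at hz
  exact ((hf _).segment_subset ⟨hx, le_max_left _ _⟩ ⟨hy, le_max_right _ _⟩ hz).2

section

variable {b c d s : ℝ}

theorem one_add_mul_div_sub_one_add_mul_div {x y : ℝ} (hx : s + b * x ≠ 0) (hy : s + b * y ≠ 0) :
    (1 + c * y) / (s + b * y) - (1 + c * x) / (s + b * x) =
      (c * s - b) * (y - x) / ((s + b * x) * (s + b * y)) := by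
  rw [div_sub_div _ _ hy hx, mul_comm (s + b * y)]
  ring

theorem monotoneOn_one_add_mul_div (hs : 0 < s) (hb : 0 ≤ b) (hbc : b ≤ c * s) :
    MonotoneOn (fun x => (1 + c * x) / (s + b * x)) (Ici 0) := by
  intro x (hx : 0 ≤ x) y (hy : 0 ≤ y) hxy
  have hx' : 0 < s + b * x := by positivity
  have hy' : 0 < s + b * y := by positivity
  rw [← sub_nonneg, one_add_mul_div_sub_one_add_mul_div hx'.ne' hy'.ne']
  exact div_nonneg (mul_nonneg (sub_nonneg.2 hbc) (sub_nonneg.2 hxy)) (by positivity)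

theorem convexOn_one_add_mul_div (hs : 0 < s) (hb : 0 ≤ b) (hcb : c * s ≤ b) :
    ConvexOn ℝ (Ici 0) (fun x => (1 + c * x) / (s + b * x)) := by
  refine ⟨convex_Ici 0, fun x (hx : 0 ≤ x) y (hy : 0 ≤ y) α β hα hβ hαβ => ?_⟩
  obtain rfl : β = 1 - α := by linarith
  have hx' : 0 < s + b * x := by positivity
  have hy' : 0 < s + b * y := by positivity
  have hz' : 0 < s + b * (α * x + (1 - α) * y) := by positivity
  have key : α * ((1 + c * x) / (s + b * x)) + (1 - α) * ((1 + c * y) / (s + b * y)) -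
      (1 + c * (α * x + (1 - α) * y)) / (s + b * (α * x + (1 - α) * y)) =
      α * (1 - α) * b * (b - c * s) * (x - y) ^ 2 /
        ((s + b * x) * (s + b * y) * (s + b * (α * x + (1 - α) * y))) := by
    field_simp
    ring
  simp only [smul_eq_mul]
  rw [← sub_nonneg, key]
  have : 0 ≤ b - c * s := sub_nonneg.2 hcb
  positivity

theorem quasiconvexOn_one_add_mul_mul_one_add_div (hd : 0 ≤ d) (hs : 0 < s) (hb : 0 ≤ b) :
    QuasiconvexOn ℝ (Ici 0) fun x => (1 + c * x) * (1 + d / (s + b * x)) := by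
  have hF : (fun x => (1 + c * x) * (1 + d / (s + b * x))) =
      fun x => (1 + c * x) + d * ((1 + c * x) / (s + b * x)) := by
    funext x
    ring
  rw [hF]
  rcases le_total b (c * s) with hbc | hcb
  · have hc : 0 ≤ c := nonneg_of_mul_nonneg_left (hb.trans hbc) hs
    refine MonotoneOn.quasiconvexOn (MonotoneOn.add ?_ ?_) (convex_Ici 0)
    · exact fun x _ y _ hxy => by gcongr
    · exact fun x hx y hy hxy =>
        mul_le_mul_of_nonneg_left (monotoneOn_one_add_mul_div hs hb hbc hx hy hxy) hd
  · have affine : ConvexOn ℝ (Ici 0) fun x : ℝ => 1 + c * x :=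
      (convexOn_const 1 (convex_Ici 0)).add ((LinearMap.mul ℝ ℝ c).convexOn (convex_Ici 0))
    exact (affine.add ((convexOn_one_add_mul_div hs hb hcb).smul hd)).quasiconvexOn

end

theorem product_rate_endpoint_optimal_in_p1_general
    (a1 a2 b12 b21 σ2 P : ℝ)
    (ha2 : 0 < a2) (hb12 : 0 ≤ b12)
    (hσ2 : 0 < σ2)
    (p2 : ℝ) (hp2 : p2 ∈ Set.Icc 0 P) :
    ∀ p1 ∈ Set.Icc (0 : ℝ) P,
      (1 + a1 * p1 / (σ2 + b21 * p2)) * (1 + a2 * p2 / (σ2 + b12 * p1)) ≤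
        max ((1 + a1 * 0 / (σ2 + b21 * p2)) * (1 + a2 * p2 / (σ2 + b12 * 0)))
            ((1 + a1 * P / (σ2 + b21 * p2)) * (1 + a2 * p2 / (σ2 + b12 * P))) := by
  intro p1 hp1
  have hF := quasiconvexOn_one_add_mul_mul_one_add_div (c := a1 / (σ2 + b21 * p2))
    (mul_nonneg ha2.le hp2.1) hσ2 hb12
  simpa only [div_mul_eq_mul_div] using
    hF.le_max_of_mem_Icc self_mem_Ici (hp1.1.trans hp1.2 : (0 : ℝ) ≤ P) hp1

/-- **Endpoint optimality in a single power variable.**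
In a two-user single-hop Gaussian interference channel with direct gains
`a₁, a₂ > 0`, cross gains `b₁₂, b₂₁ ≥ 0` and noise `σ² > 0`, fix `p₂ ∈ [0,P]`
and let `F(p₁) = (1 + a₁p₁/(σ² + b₂₁p₂))·(1 + a₂p₂/(σ² + b₁₂p₁))`. Then for
every `p₁ ∈ [0,P]`, `F(p₁) ≤ max (F 0) (F P)`. -/
theorem product_rate_endpoint_optimal_in_p1
    (a1 a2 b12 b21 σ2 P : ℝ)
    (ha1 : 0 < a1) (ha2 : 0 < a2) (hb12 : 0 ≤ b12) (hb21 : 0 ≤ b21)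
    (hσ2 : 0 < σ2) (hP : 0 < P)
    (p2 : ℝ) (hp2 : p2 ∈ Set.Icc 0 P) :
    ∀ p1 ∈ Set.Icc (0 : ℝ) P,
      (1 + a1 * p1 / (σ2 + b21 * p2)) * (1 + a2 * p2 / (σ2 + b12 * p1)) ≤
        max ((1 + a1 * 0 / (σ2 + b21 * p2)) * (1 + a2 * p2 / (σ2 + b12 * 0)))
            ((1 + a1 * P / (σ2 + b21 * p2)) * (1 + a2 * p2 / (σ2 + b12 * P))) :=
  product_rate_endpoint_optimal_in_p1_general a1 a2 b12 b21 σ2 P ha2 hb12 hσ2 p2 hp2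
end
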